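/- If a subgroup Γ ≤ Diff₊(I) is locally transitive, then Γ is dynamically 1-transitive: for every p ∈ (0,1) and every non-empty open interval J ⊆ (0,1) there exists γ ∈ Γ with γ(p) ∈ J. -/

import Mathlib

/-!
If `p ≤ c`, let `s` be the supremum of the orbit points of `p` in `[0, c]`. Local transitivity
gives `τ ∈ Γ` with `‖τ‖ < d - c` and `τ s > s`; by continuity `τ` also pushes the orbit points
just left of `s` past `s`, hence past `c`, while moving them by less than `d - c`, so they land in
`(c, d)`. The case `p ≥ d` is symmetric, with an infimum.
-/

noncomputable section

/-- The unit interval `[0,1] ⊆ ℝ`. -/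
abbrev unitI : Set ℝ := Set.Icc (0:ℝ) 1

/-- Ambient group: bijections of the unit interval. -/
abbrev IntervalMap : Type := Equiv.Perm ↥unitI

/-- The extension of `σ` to `ℝ`, by the identity outside `[0,1]`. -/
def toReal (σ : IntervalMap) : ℝ → ℝ :=
  fun x => if h : x ∈ unitI then (σ ⟨x, h⟩ : ℝ) else x

/-- `σ` is an orientation-preserving homeomorphism of `[0,1]` (a strictly
increasing bijection of `[0,1]`; such a map automatically fixes `0` and `1`
and is continuous). -/
def IsOPH (σ : IntervalMap) : Prop := StrictMono fun x : ↥unitI => (σ x : ℝ)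

/-- `σ` extends to a `C¹` function on `[0,1]`. -/
def IsC1On (σ : IntervalMap) : Prop := ContDiffOn ℝ 1 (toReal σ) unitI

/-- `σ` is an orientation-preserving `C¹` diffeomorphism of `[0,1]`. -/
def IsOPD (σ : IntervalMap) : Prop := IsOPH σ ∧ IsC1On σ ∧ IsC1On σ⁻¹

/-- `Γ` is a subgroup of `Diff₊(I)`. -/
def DiffSubgroup (Γ : Subgroup IntervalMap) : Prop := ∀ γ ∈ Γ, IsOPD γ

/-- `Γ` is a subgroup of `Homeo₊(I)`. -/
def HomeoSubgroup (Γ : Subgroup IntervalMap) : Prop := ∀ γ ∈ Γ, IsOPH γ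

/-- The set of fixed points of `σ` in the open interval `(0,1)`. -/
def FixPts (σ : IntervalMap) : Set ↥unitI :=
  {x : ↥unitI | σ x = x ∧ 0 < (x : ℝ) ∧ (x : ℝ) < 1}

/-- Every non-identity element of `Γ` has finitely many fixed points in `(0,1)`. -/
def FinFix (Γ : Subgroup IntervalMap) : Prop := ∀ γ ∈ Γ, γ ≠ 1 → (FixPts γ).Finite

/-- The `C⁰`-norm `‖σ‖ = sup_{x ∈ [0,1]} |σ(x) - x|`. -/
def C0norm (σ : IntervalMap) : ℝ := ⨆ x : ↥unitI, |(σ x : ℝ) - (x : ℝ)|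

/-- `Γ` is locally transitive. -/
def LocTrans (Γ : Subgroup IntervalMap) : Prop :=
  ∀ p : ↥unitI, 0 < (p : ℝ) → (p : ℝ) < 1 → ∀ ε : ℝ, 0 < ε →
    ∃ γ ∈ Γ, C0norm γ < ε ∧ γ p ≠ p

/-- `Γ` is irreducible: no global fixed point in `(0,1)`. -/
def Irred (Γ : Subgroup IntervalMap) : Prop :=
  ¬ ∃ p : ↥unitI, 0 < (p : ℝ) ∧ (p : ℝ) < 1 ∧ ∀ γ ∈ Γ, γ p = p

/-- The group `Aff₊(ℝ)` of orientation-preserving affine maps `x ↦ a x + b`,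
`a > 0`, as a subgroup of the permutation group of `ℝ`. -/
def AffPlus : Subgroup (Equiv.Perm ℝ) where
  carrier := {e | ∃ a b : ℝ, 0 < a ∧ ∀ x, e x = a * x + b}
  one_mem' := ⟨1, 0, one_pos, fun x => by simp⟩
  mul_mem' := by
    rintro e f ⟨a, b, ha, he⟩ ⟨c, d, hc, hf⟩
    refine ⟨a * c, a * d + b, mul_pos ha hc, fun x => ?_⟩
    rw [Equiv.Perm.mul_apply, hf, he]; ring
  inv_mem' := by
    rintro e ⟨a, b, ha, he⟩
    refine ⟨a⁻¹, -b / a, by positivity, fun y => ?_⟩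
    apply e.injective
    rw [show e (e⁻¹ y) = y from e.apply_symm_apply y, he]
    field_simp
    ring

/-- `G` embeds into (i.e. is isomorphic to a subgroup of) `Aff₊(ℝ)`. -/
def EmbedsInAff (G : Type*) [Group G] : Prop :=
  ∃ φ : G →* ↥AffPlus, Function.Injective φ

/-- `G` embeds into `Aff₊(ℝ)ⁿ` for some `n ≥ 1`. -/
def EmbedsInAffPow (G : Type*) [Group G] : Prop :=
  ∃ n : ℕ, 1 ≤ n ∧ ∃ φ : G →* (Fin n → ↥AffPlus), Function.Injective φ

/-- `G` has infinite girth: for every `m` there is a finite generating set `S`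
such that no non-trivial reduced word of length at most `m` in `S ∪ S⁻¹`
represents the identity. -/
def HasInfiniteGirth (G : Type*) [Group G] : Prop :=
  ∀ m : ℕ, ∃ S : Finset G, Subgroup.closure (S : Set G) = ⊤ ∧
    ∀ w : FreeGroup {x // x ∈ S}, w ≠ 1 →
      (∃ l : List ({x // x ∈ S} × Bool), l.length ≤ m ∧ FreeGroup.mk l = w) →
      FreeGroup.lift (fun s => (s : G)) w ≠ 1

/-- `a` and `b` generate a free semigroup on two generators: distinct
non-empty positive words in `a, b` give distinct elements. -/
def FreeSemigroupPair {G : Type*} [Group G] (a b : G) : Prop :=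
  Function.Injective
    ⇑(FreeSemigroup.lift (fun x : Bool => if x then a else b) : FreeSemigroup Bool →ₙ* G)

/-- `g < f` in the biorder: `g(x) < f(x)` near `0`. -/
def ltNear (g f : IntervalMap) : Prop :=
  ∃ δ : ℝ, 0 < δ ∧ ∀ x : ↥unitI, 0 < (x : ℝ) → (x : ℝ) < δ → (g x : ℝ) < (f x : ℝ)

/-- `g ≤ f` in the biorder. -/
def leNear (g f : IntervalMap) : Prop := ltNear g f ∨ g = f

/-- `g << f`: `g` is infinitesimal with respect to `f`, i.e. `gⁿ < f` for all `n ∈ ℤ`. -/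
def Infinitesimal (g f : IntervalMap) : Prop := ∀ n : ℤ, ltNear (g ^ n) f

/-- `(f, g)` is a crossed pair on the interval `(a,b)`: `f` fixes `a` and `b`
but no point strictly between them, while `g` maps `a` or `b` into `(a,b)`. -/
def CrossedOn (f g : IntervalMap) (a b : ↥unitI) : Prop :=
  f a = a ∧ f b = b ∧ (∀ x : ↥unitI, (a : ℝ) < x → (x : ℝ) < b → f x ≠ x) ∧
  (((a : ℝ) < (g a : ℝ) ∧ (g a : ℝ) < b) ∨ ((a : ℝ) < (g b : ℝ) ∧ (g b : ℝ) < b))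

/-- `(f, g)` is a crossed pair. -/
def CrossedPair (f g : IntervalMap) : Prop :=
  ∃ a b : ↥unitI, (a : ℝ) < b ∧ (CrossedOn f g a b ∨ CrossedOn g f a b)

/-- The auxiliary point configuration used in weak transitivity:
`extPt γ p 0 = 0`, `extPt γ p j = γ(pⱼ)` for `1 ≤ j ≤ k` (here `pⱼ = p ⟨j-1⟩`
in `0`-indexed notation), and `extPt γ p (k+1) = 1`. -/
def extPt (γ : IntervalMap) {k : ℕ} (p : Fin k → ↥unitI) (j : ℕ) : ℝ :=
  if j = 0 then 0 else if h : j - 1 < k then (γ (p ⟨j - 1, h⟩) : ℝ) else 1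

/-- `Γ` is weakly `k`-transitive. -/
def WeaklyKTrans (Γ : Subgroup IntervalMap) (k : ℕ) : Prop :=
  ∀ g ∈ Γ, ∀ p : Fin k → ↥unitI,
    (∀ i, 0 < (p i : ℝ) ∧ (p i : ℝ) < 1) →
    (StrictMono fun i => (p i : ℝ)) →
    ∀ ε : ℝ, 0 < ε →
      ∃ γ ∈ Γ, extPt γ p k < ε ∧
        ∀ i : Fin k,
          extPt γ p i.val < (g (γ (p i)) : ℝ) ∧
            (g (γ (p i)) : ℝ) < extPt γ p (i.val + 2)

/-- `Γ` is weakly transitive. -/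
def WeakTrans (Γ : Subgroup IntervalMap) : Prop := ∀ k : ℕ, 1 ≤ k → WeaklyKTrans Γ k

lemma DiffSubgroup.homeoSubgroup {Γ : Subgroup IntervalMap} (hΓ : DiffSubgroup Γ) :
    HomeoSubgroup Γ :=
  fun γ hγ => (hΓ γ hγ).1

lemma IsOPH.strictMono {σ : IntervalMap} (hσ : IsOPH σ) : StrictMono σ :=
  fun _ _ hxy => Subtype.coe_lt_coe.mp (hσ hxy)

lemma IsOPH.continuous {σ : IntervalMap} (hσ : IsOPH σ) : Continuous σ :=
  hσ.strictMono.monotone.continuous_of_surjective σ.surjective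

lemma IsOPH.lt_inv_apply_iff {σ : IntervalMap} (hσ : IsOPH σ) (x : ↥unitI) :
    x < σ⁻¹ x ↔ σ x < x := by
  simpa using (hσ.strictMono.lt_iff_lt (a := x) (b := σ⁻¹ x)).symm

lemma C0norm_bddAbove (σ : IntervalMap) :
    BddAbove (Set.range fun x : ↥unitI => |(σ x : ℝ) - (x : ℝ)|) := by
  refine ⟨1, ?_⟩
  rintro _ ⟨x, rfl⟩
  obtain ⟨hσx₀, hσx₁⟩ := (σ x).2
  obtain ⟨hx₀, hx₁⟩ := x.2
  exact abs_sub_le_iff.mpr ⟨by linarith, by linarith⟩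

lemma abs_apply_sub_le_C0norm (σ : IntervalMap) (x : ↥unitI) :
    |(σ x : ℝ) - (x : ℝ)| ≤ C0norm σ :=
  le_ciSup (C0norm_bddAbove σ) x

lemma C0norm_inv_le (σ : IntervalMap) : C0norm σ⁻¹ ≤ C0norm σ := by
  have : Nonempty ↥unitI := ⟨⟨0, Set.left_mem_Icc.mpr zero_le_one⟩⟩
  refine ciSup_le fun x => ?_
  simpa [abs_sub_comm] using abs_apply_sub_le_C0norm σ (σ⁻¹ x)

lemma C0norm_inv (σ : IntervalMap) : C0norm σ⁻¹ = C0norm σ :=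
  le_antisymm (C0norm_inv_le σ) (by simpa using C0norm_inv_le σ⁻¹)

section LocTrans

variable {Γ : Subgroup IntervalMap}

lemma LocTrans.exists_lt_apply (hloc : LocTrans Γ) (hΓ : HomeoSubgroup Γ)
    {s : ↥unitI} (hs₀ : 0 < (s : ℝ)) (hs₁ : (s : ℝ) < 1) {ε : ℝ} (hε : 0 < ε) :
    ∃ τ ∈ Γ, C0norm τ < ε ∧ s < τ s := by
  obtain ⟨γ, hγΓ, hγε, hγs⟩ := hloc s hs₀ hs₁ ε hε
  rcases hγs.lt_or_gt with hlt | hgt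
  · exact ⟨γ⁻¹, Γ.inv_mem hγΓ, (C0norm_inv γ).symm ▸ hγε,
      ((hΓ γ hγΓ).lt_inv_apply_iff s).mpr hlt⟩
  · exact ⟨γ, hγΓ, hγε, hgt⟩

lemma LocTrans.exists_apply_lt (hloc : LocTrans Γ) (hΓ : HomeoSubgroup Γ)
    {s : ↥unitI} (hs₀ : 0 < (s : ℝ)) (hs₁ : (s : ℝ) < 1) {ε : ℝ} (hε : 0 < ε) :
    ∃ τ ∈ Γ, C0norm τ < ε ∧ τ s < s := by
  obtain ⟨τ, hτΓ, hτε, hτs⟩ := hloc.exists_lt_apply hΓ hs₀ hs₁ hε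
  refine ⟨τ⁻¹, Γ.inv_mem hτΓ, (C0norm_inv τ).symm ▸ hτε, ?_⟩
  simpa using ((hΓ τ⁻¹ (Γ.inv_mem hτΓ)).lt_inv_apply_iff s).mp (by simpa using hτs)

lemma LocTrans.exists_apply_mem_Ioo_of_le (hloc : LocTrans Γ) (hΓ : HomeoSubgroup Γ)
    {p : ↥unitI} (hp₀ : 0 < (p : ℝ)) {c d : ℝ} (hpc : (p : ℝ) ≤ c) (hcd : c < d) (hd : d ≤ 1) :
    ∃ γ ∈ Γ, c < (γ p : ℝ) ∧ (γ p : ℝ) < d := by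
  set S : Set ℝ := {x | ∃ γ ∈ Γ, (γ p : ℝ) = x ∧ x ≤ c}
  have hpS : (p : ℝ) ∈ S := ⟨1, Γ.one_mem, rfl, hpc⟩
  have hS : BddAbove S := ⟨c, fun _ ⟨_, _, _, hx⟩ => hx⟩
  set s := sSup S
  have hps : (p : ℝ) ≤ s := le_csSup hS hpS
  have hsc : s ≤ c := csSup_le ⟨_, hpS⟩ fun _ ⟨_, _, _, hx⟩ => hx
  obtain ⟨τ, hτΓ, hτε, hτs⟩ := hloc.exists_lt_apply hΓ (s := ⟨s, by linarith, by linarith⟩)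
    (show 0 < s by linarith) (show s < 1 by linarith) (sub_pos.mpr hcd)
  obtain ⟨δ, hδ, hpushed⟩ := Metric.eventually_nhds_iff.mp
    ((hΓ τ hτΓ).continuous.continuousAt.eventually (lt_mem_nhds hτs))
  obtain ⟨_, ⟨γ, hγΓ, rfl, hγc⟩, hγδ⟩ := exists_lt_of_lt_csSup ⟨_, hpS⟩ (sub_lt_self s hδ)
  have hγs : (γ p : ℝ) ≤ s := le_csSup hS ⟨γ, hγΓ, rfl, hγc⟩
  have hτγ : s < τ (γ p) := hpushed <| by
    rw [Subtype.dist_eq, Real.dist_eq, abs_sub_lt_iff]; constructor <;> linarith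
  have hmove := (abs_le.mp (abs_apply_sub_le_C0norm τ (γ p))).2
  refine ⟨τ * γ, Γ.mul_mem hτΓ hγΓ, ?_, by simp; linarith⟩
  by_contra! h
  exact (le_csSup hS ⟨τ * γ, Γ.mul_mem hτΓ hγΓ, rfl, h⟩).not_gt hτγ

lemma LocTrans.exists_apply_mem_Ioo_of_ge (hloc : LocTrans Γ) (hΓ : HomeoSubgroup Γ)
    {p : ↥unitI} (hp₁ : (p : ℝ) < 1) {c d : ℝ} (hc : 0 ≤ c) (hcd : c < d) (hdp : d ≤ (p : ℝ)) :
    ∃ γ ∈ Γ, c < (γ p : ℝ) ∧ (γ p : ℝ) < d := by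
  set S : Set ℝ := {x | ∃ γ ∈ Γ, (γ p : ℝ) = x ∧ d ≤ x}
  have hpS : (p : ℝ) ∈ S := ⟨1, Γ.one_mem, rfl, hdp⟩
  have hS : BddBelow S := ⟨d, fun _ ⟨_, _, _, hx⟩ => hx⟩
  set s := sInf S
  have hsp : s ≤ (p : ℝ) := csInf_le hS hpS
  have hds : d ≤ s := le_csInf ⟨_, hpS⟩ fun _ ⟨_, _, _, hx⟩ => hx
  obtain ⟨τ, hτΓ, hτε, hτs⟩ := hloc.exists_apply_lt hΓ (s := ⟨s, by linarith, by linarith⟩)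
    (show 0 < s by linarith) (show s < 1 by linarith) (sub_pos.mpr hcd)
  obtain ⟨δ, hδ, hpushed⟩ := Metric.eventually_nhds_iff.mp
    ((hΓ τ hτΓ).continuous.continuousAt.eventually (gt_mem_nhds hτs))
  obtain ⟨_, ⟨γ, hγΓ, rfl, hγd⟩, hγδ⟩ := exists_lt_of_csInf_lt ⟨_, hpS⟩ (lt_add_of_pos_right s hδ)
  have hγs : s ≤ (γ p : ℝ) := csInf_le hS ⟨γ, hγΓ, rfl, hγd⟩
  have hτγ : τ (γ p) < s := hpushed <| by
    rw [Subtype.dist_eq, Real.dist_eq, abs_sub_lt_iff]; constructor <;> linarith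
  have hmove := (abs_le.mp (abs_apply_sub_le_C0norm τ (γ p))).1
  refine ⟨τ * γ, Γ.mul_mem hτΓ hγΓ, by simp; linarith, ?_⟩
  by_contra! h
  exact (csInf_le hS ⟨τ * γ, Γ.mul_mem hτΓ hγΓ, rfl, h⟩).not_gt hτγ

end LocTrans

theorem stmt12 (Γ : Subgroup IntervalMap) (hΓdiff : DiffSubgroup Γ)
    (hΓloc : LocTrans Γ) :
    ∀ p : ↥unitI, 0 < (p : ℝ) → (p : ℝ) < 1 →
      ∀ c d : ℝ, 0 ≤ c → c < d → d ≤ 1 →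
        ∃ γ ∈ Γ, c < (γ p : ℝ) ∧ (γ p : ℝ) < d := by
  intro p hp₀ hp₁ c d hc hcd hd
  rcases le_or_gt (p : ℝ) c with hpc | hcp
  · exact hΓloc.exists_apply_mem_Ioo_of_le hΓdiff.homeoSubgroup hp₀ hpc hcd hd
  rcases lt_or_ge (p : ℝ) d with hpd | hdp
  · exact ⟨1, Γ.one_mem, hcp, hpd⟩
  · exact hΓloc.exists_apply_mem_Ioo_of_ge hΓdiff.homeoSubgroup hp₁ hc hcd hdp

end
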